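/- Adjacent swap monotonicity of AP: if b ∈ {0,1}^N has b_k = 0 and b_{k+1} = 1 for some k, then swapping these two entries strictly increases AP (assuming T ≥ 1). -/

import Mathlib

open Finset

/-- Number of true detections among the first `k+1` (ranks `1..k+1`) entries. -/
def prefCount {N : ℕ} (b : Fin N → Bool) (k : Fin N) : ℕ :=
  (Finset.univ.filter (fun j : Fin N => j ≤ k ∧ b j = true)).card

/-- Total number of true detections. -/
def numTrue {N : ℕ} (b : Fin N → Bool) : ℕ :=
  (Finset.univ.filter (fun j : Fin N => b j = true)).card

/-- Average precision of a ranked binary detection sequence (0 if no true positives). -/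
noncomputable def AP {N : ℕ} (b : Fin N → Bool) : ℝ :=
  if numTrue b = 0 then 0 else
    (1 / (numTrue b : ℝ)) *
      ∑ k ∈ Finset.univ.filter (fun k : Fin N => b k = true),
        (prefCount b k : ℝ) / ((k : ℕ) + 1)

/-!
Swapping positions `i` and `i + 1` permutes the true positives, so `T` is unchanged, and
reindexing the sum in `AP` along the swap pairs the true positives of the two sequences. The true
positive at index `i + 1` moves one rank up with the same number of true positives at or above it,
so its precision strictly increases; every other true positive keeps its rank and prefix count.
-/

variable {N : ℕ}

noncomputable def precision (b : Fin N → Bool) (m : Fin N) : ℝ :=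
  (prefCount b m : ℝ) / ((m : ℕ) + 1)

theorem numTrue_comp_perm (b : Fin N → Bool) (σ : Equiv.Perm (Fin N)) :
    numTrue (b ∘ σ) = numTrue b :=
  card_equiv σ (by simp)

theorem numTrue_pos {b : Fin N → Bool} {m : Fin N} (hm : b m = true) : 0 < numTrue b :=
  card_pos.mpr ⟨m, by simp [hm]⟩

theorem prefCount_pos {b : Fin N → Bool} {m : Fin N} (hm : b m = true) : 0 < prefCount b m :=
  card_pos.mpr ⟨m, by simp [hm]⟩

theorem swap_le_iff_of_val_eq_succ {i j m : Fin N} (hij : (j : ℕ) = i + 1) (hm : m ≠ i)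
    (l : Fin N) : Equiv.swap i j l ≤ m ↔ l ≤ m := by
  have hm' : (m : ℕ) ≠ i := Fin.val_ne_of_ne hm
  rw [Equiv.swap_apply_def]
  split_ifs with hli hlj <;> simp only [Fin.le_def, Fin.ext_iff] at * <;> omega

theorem prefCount_comp_swap_of_ne {b : Fin N → Bool} {i j m : Fin N} (hij : (j : ℕ) = i + 1)
    (hm : m ≠ i) : prefCount (b ∘ Equiv.swap i j) m = prefCount b m :=
  card_equiv (Equiv.swap i j) fun l => by
    simp [swap_le_iff_of_val_eq_succ hij hm]

theorem prefCount_comp_swap_left {b : Fin N → Bool} {i j : Fin N} (hij : (j : ℕ) = i + 1)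
    (hi : b i = false) : prefCount (b ∘ Equiv.swap i j) i = prefCount b j :=
  card_equiv (Equiv.swap i j) fun l => by
    simp only [mem_filter_univ, Function.comp_apply]
    rw [Equiv.swap_apply_def]
    split_ifs with hli hlj
    · simp [hli]
    · simp [hlj, hi]
    · simp only [Fin.le_def, Fin.ext_iff] at *
      constructor <;> rintro ⟨hle, hb⟩ <;> exact ⟨by omega, hb⟩

theorem sum_precision_lt_comp_swap {b : Fin N → Bool} {i j : Fin N} (hij : (j : ℕ) = i + 1)
    (hi : b i = false) (hj : b j = true) :
    ∑ m ∈ univ.filter (fun m => b m = true), precision b m <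
      ∑ m ∈ univ.filter (fun m => (b ∘ Equiv.swap i j) m = true),
        precision (b ∘ Equiv.swap i j) m := by
  set σ := Equiv.swap i j
  have hreindex : ∑ m ∈ univ.filter (fun m => (b ∘ σ) m = true), precision (b ∘ σ) m =
      ∑ m ∈ univ.filter (fun m => b m = true), precision (b ∘ σ) (σ m) :=
    sum_equiv σ (by simp) (by simp [σ])
  have hstrict : precision b j < precision (b ∘ σ) (σ j) := by
    rw [Equiv.swap_apply_right, precision, precision, prefCount_comp_swap_left hij hi, hij]
    have hpos : (0 : ℝ) < prefCount b j := by exact_mod_cast prefCount_pos hj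
    gcongr
    linarith
  rw [hreindex]
  refine sum_lt_sum (fun m hm => ?_) ⟨j, by simp [hj], hstrict⟩
  rcases eq_or_ne m j with rfl | hmj
  · exact hstrict.le
  · have hmi : m ≠ i := by rintro rfl; simp_all
    rw [Equiv.swap_apply_of_ne_of_ne hmi hmj, precision, precision,
      prefCount_comp_swap_of_ne hij hmi]

theorem stmt10_general {N : ℕ} (b : Fin N → Bool) (k : ℕ) (hk : k + 1 < N)
    (h0 : b ⟨k, Nat.lt_of_succ_lt hk⟩ = false) (h1 : b ⟨k + 1, hk⟩ = true) :
    AP b < AP (b ∘ Equiv.swap ⟨k, Nat.lt_of_succ_lt hk⟩ ⟨k + 1, hk⟩) := by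
  have hT := numTrue_pos h1
  rw [AP, AP, numTrue_comp_perm, if_neg hT.ne', if_neg hT.ne']
  exact mul_lt_mul_of_pos_left (sum_precision_lt_comp_swap rfl h0 h1)
    (one_div_pos.mpr (Nat.cast_pos.mpr hT))

/-- Adjacent swap monotonicity: swapping an adjacent `(0,1)` pair to `(1,0)` strictly
increases AP (the sequence has at least one true entry since `b (k+1) = true`). -/
theorem stmt10 {N : ℕ} (b : Fin N → Bool) (k : ℕ) (hk : k + 1 < N)
    (h0 : b ⟨k, Nat.lt_of_succ_lt hk⟩ = false) (h1 : b ⟨k + 1, hk⟩ = true)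
    (hT : 1 ≤ numTrue b) :
    AP b < AP (b ∘ Equiv.swap ⟨k, Nat.lt_of_succ_lt hk⟩ ⟨k + 1, hk⟩) :=
  stmt10_general b k hk h0 h1
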